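/- arXiv:1605.05838 — 2 statements merged into one kernel-verified Lean document; each statement's English description precedes it below -/
import Mathlib

section
/- If U is a Σ^0_2 upward closed set of finite binary strings, then there exists a computable sequence (V_s) of finite sets of strings, with upward closures 𝐕_s, such that (i) for each string σ, σ ∈ U if and only if there exists s_0 such that σ ∈ 𝐕_s for all s > s_0, and (ii) there are infinitely many s with 𝐕_s ⊆ U. -/
open scoped Classical
open MeasureTheory

namespace RandProb

/-- Cantor space: the space of infinite binary sequences. -/
abbrev Cantor := ℕ → Bool

/-! ### Oracle partial recursive functions, via codes -/

/-- Codes for partial recursive functions with access to an oracle `O : ℕ → ℕ`.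
These codes play the role of (oracle) Turing machines. -/
inductive CodeO : Type
  | zero : CodeO
  | succ : CodeO
  | left : CodeO
  | right : CodeO
  | oracle : CodeO
  | pair : CodeO → CodeO → CodeO
  | comp : CodeO → CodeO → CodeO
  | prec : CodeO → CodeO → CodeO
  | rfind' : CodeO → CodeO

/-- Evaluation of an oracle code with (total) oracle `O`. -/
def CodeO.eval (O : ℕ → ℕ) : CodeO → ℕ →. ℕ
  | .zero => pure 0
  | .succ => Nat.succ
  | .left => ↑fun n : ℕ => n.unpair.1
  | .right => ↑fun n : ℕ => n.unpair.2
  | .oracle => ↑fun n : ℕ => O n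
  | .pair cf cg => fun n => Nat.pair <$> cf.eval O n <*> cg.eval O n
  | .comp cf cg => fun n => cg.eval O n >>= cf.eval O
  | .prec cf cg =>
    Nat.unpaired fun a n =>
      n.rec (cf.eval O a) fun y IH => do
        let i ← IH
        cg.eval O (Nat.pair a (Nat.pair y i))
  | .rfind' cf =>
    Nat.unpaired fun a m =>
      (Nat.rfind fun n => (fun m => m = 0) <$> cf.eval O (Nat.pair a (n + m))).map (· + m)

/-- A canonical injective numbering of oracle codes. -/
def CodeO.encode : CodeO → ℕ
  | .zero => 0
  | .succ => 1
  | .left => 2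
  | .right => 3
  | .oracle => 4
  | .pair cf cg => 2 * (2 * Nat.pair cf.encode cg.encode) + 5
  | .comp cf cg => 2 * (2 * Nat.pair cf.encode cg.encode + 1) + 5
  | .prec cf cg => 2 * (2 * Nat.pair cf.encode cg.encode) + 6
  | .rfind' cf => 2 * (2 * cf.encode + 1) + 6

/-- The Turing jump of an oracle: the halting problem relative to `O`,
as a `{0,1}`-valued function. -/
noncomputable def jump (O : ℕ → ℕ) : ℕ → ℕ := fun e =>
  if ∃ c : CodeO, c.encode = e ∧ (c.eval O e).Dom then 1 else 0

/-- `iterJump n` is `∅^(n)`, the `n`-th iterate of the halting problem (as an oracle). -/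
noncomputable def iterJump : ℕ → ℕ → ℕ
  | 0 => fun _ => 0
  | n + 1 => jump (iterJump n)

/-- `S ⊆ ℕ` is computably enumerable relative to the oracle `O`. -/
def CeIn (O : ℕ → ℕ) (S : Set ℕ) : Prop := ∃ c : CodeO, S = {m | (c.eval O m).Dom}

/-- The left Dedekind cut of `α` (as a set of codes of rationals) is c.e. in `O`. -/
def LeftCeIn (O : ℕ → ℕ) (α : ℝ) : Prop :=
  CeIn O {m | ∃ q : ℚ, Encodable.encode q = m ∧ (q : ℝ) < α}

/-- The right Dedekind cut of `α` (as a set of codes of rationals) is c.e. in `O`. -/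
def RightCeIn (O : ℕ → ℕ) (α : ℝ) : Prop :=
  CeIn O {m | ∃ q : ℚ, Encodable.encode q = m ∧ α < (q : ℝ)}

/-! ### Martin-Löf randomness for real numbers -/

/-- The `i`-th component of a Martin-Löf test coded by the set `W ⊆ ℕ`:
the union of all open rational intervals whose codes are enumerated into the
`i`-th section of `W`. -/
def testSet (W : Set ℕ) (i : ℕ) : Set ℝ :=
  {x | ∃ p q : ℚ, Nat.pair i (Encodable.encode (p, q)) ∈ W ∧ (p : ℝ) < x ∧ x < (q : ℝ)}

/-- `α` is Martin-Löf random relative to the oracle `O`. -/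
def MLRandomIn (O : ℕ → ℕ) (α : ℝ) : Prop :=
  ∀ W : Set ℕ, CeIn O W →
    (∀ i, volume (testSet W i) ≤ ENNReal.ofReal ((2 : ℝ)⁻¹ ^ i)) →
    ∃ i, α ∉ testSet W i

/-- `α` is `n`-random: Martin-Löf random relative to `∅^(n-1)`. -/
def NRandom (n : ℕ) (α : ℝ) : Prop := MLRandomIn (iterJump (n - 1)) α

/-! ### The uniform measure on Cantor space -/

/-- The binary digits of a real number (meaningful on `[0,1)`). -/
noncomputable def digits (x : ℝ) : Cantor := fun n => decide (⌊x * 2 ^ (n + 1)⌋ % 2 = 1)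

/-- The uniform (Lebesgue) product measure on Cantor space, obtained as the
pushforward of Lebesgue measure on `[0,1)` under the binary-digit map. -/
noncomputable def mu : Measure Cantor :=
  Measure.map digits (volume.restrict (Set.Ico (0 : ℝ) 1))

/-- The uniform measure of a set of elements of Cantor space, as a real number. -/
noncomputable def muR (S : Set Cantor) : ℝ := (mu S).toReal

/-! ### Strings, prefixes and cylinders -/

/-- The length-`n` initial segment of `X ∈ 2^ω`, as a finite binary string. -/
def initSeg (X : Cantor) (n : ℕ) : List Bool := (List.range n).map X

/-- `⟦S⟧`: the elements of Cantor space having a prefix in the set of strings `S`. -/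
def cyl (S : Set (List Bool)) : Set Cantor := {X | ∃ n, initSeg X n ∈ S}

/-- A set of strings is prefix-free if none of its elements properly extends another. -/
def IsPrefixFree (S : Set (List Bool)) : Prop := ∀ σ ∈ S, ∀ τ ∈ S, σ <+: τ → σ = τ

/-- A set of strings is upward closed if it is closed under taking extensions. -/
def UpClosed (S : Set (List Bool)) : Prop := ∀ σ ∈ S, ∀ τ, σ <+: τ → τ ∈ S

/-- Two strings are compatible if one is a prefix of the other. -/
def Compatible (σ τ : List Bool) : Prop := σ <+: τ ∨ τ <+: σ

/-! ### Oracle machines -/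

/-- An element of Cantor space viewed as a `{0,1}`-valued oracle. -/
def oX (X : Cantor) : ℕ → ℕ := fun n => cond (X n) 1 0

/-- `evalO X c n`: the (possibly divergent) output of the oracle machine `c`
on input `n` with oracle `X`. -/
def evalO (X : Cantor) (c : CodeO) (n : ℕ) : Part ℕ := c.eval (oX X) n

/-- The oracle obtained by writing the string `ρ` before the bits of `X`. -/
def prepend (ρ : List Bool) (X : Cantor) : Cantor := fun n =>
  if n < ρ.length then ρ.getD n false else X (n - ρ.length)

/-- `X ∈ 2^ω` extends the finite string `ρ`. -/
def Extends (X : Cantor) (ρ : List Bool) : Prop := initSeg X ρ.length = ρ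

/-- `u` is a universal oracle machine: some effective, prefix-free translation
`c ↦ σ_c` satisfies `u(σ_c * X, n) ≃ c(X, n)` for all machines `c`. -/
def UniversalOM (u : CodeO) : Prop :=
  ∃ σ : CodeO → List Bool,
    (∃ f : ℕ → ℕ, Computable f ∧ ∀ c : CodeO, f c.encode = Encodable.encode (σ c)) ∧
    IsPrefixFree (Set.range σ) ∧
    ∀ (c : CodeO) (X : Cantor) (n : ℕ), evalO (prepend (σ c) X) u n = evalO X c n

/-- `TOT(c)`: the oracles `X` such that the function `c(X)` is total. -/
def TOT (c : CodeO) : Set Cantor := {X | ∀ n, (evalO X c n).Dom}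

/-- The domain of the partial function `c(X)`. -/
def domSet (c : CodeO) (X : Cantor) : Set ℕ := {n | (evalO X c n).Dom}

/-- The range of the partial function `c(X)`. -/
def ranSet (c : CodeO) (X : Cantor) : Set ℕ := {v | ∃ n, v ∈ evalO X c n}

/-- `INF(c)`: the oracles `X` such that `c(X)` has infinite domain. -/
def INF (c : CodeO) : Set Cantor := {X | (domSet c X).Infinite}

/-- `COF(c)`: the oracles `X` such that `c(X)` has cofinite domain. -/
def COF (c : CodeO) : Set Cantor := {X | (domSet c X)ᶜ.Finite}

/-- `COM(c)`: the oracles `X` such that `c(X)` has computable domain. -/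
def COM (c : CodeO) : Set Cantor := {X | ComputablePred fun n => n ∈ domSet c X}

/-- The characteristic function of a set of naturals. -/
noncomputable def chi (A : Set ℕ) : ℕ → ℕ := fun n => if n ∈ A then 1 else 0

/-- Turing reducibility between sets of naturals. -/
def TuringLEs (B A : Set ℕ) : Prop := ∃ c : CodeO, ∀ n, c.eval (chi A) n = Part.some (chi B n)

/-- The halting problem `∅'` as a set of naturals. -/
noncomputable def HaltingSet : Set ℕ := {e | iterJump 1 e = 1}

/-- `COMPL(c)`: the oracles `X` such that the domain of `c(X)` computes the halting problem. -/
noncomputable def COMPL (c : CodeO) : Set Cantor := {X | TuringLEs HaltingSet (domSet c X)}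

/-- Turing reducibility between total functions on ℕ. -/
def TuringLEf (f g : ℕ → ℕ) : Prop := ∃ c : CodeO, ∀ n, c.eval g n = Part.some (f n)

/-- A real number viewed as an oracle, via its binary expansion. -/
noncomputable def realOracle (α : ℝ) : ℕ → ℕ := oX (digits α)

/-- Two reals have Turing-incomparable degrees. -/
noncomputable def TIncompReal (α β : ℝ) : Prop :=
  ¬ TuringLEf (realOracle α) (realOracle β) ∧ ¬ TuringLEf (realOracle β) (realOracle α)

/-! ### Arithmetical hierarchy -/

/-- Evaluation with the trivial (empty) oracle: ordinary partial recursion. -/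
def eval0 (c : CodeO) : ℕ →. ℕ := c.eval fun _ => 0

/-- `SigmaNumIdx n c` is the `Σ^0_{n+1}` subset of `ℕ` with index `c`. -/
def SigmaNumIdx : ℕ → CodeO → Set ℕ
  | 0, c => {m | (eval0 c m).Dom}
  | n + 1, c => {m | ∃ k, Nat.pair m k ∉ SigmaNumIdx n c}

/-- `S ⊆ ℕ` is `Σ^0_n` (intended for `n ≥ 1`). -/
def SigmaN (n : ℕ) (S : Set ℕ) : Prop := ∃ c : CodeO, S = SigmaNumIdx (n - 1) c

/-- The set of codes of the elements of a set of binary strings. -/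
def strCodes (S : Set (List Bool)) : Set ℕ := {m | ∃ σ ∈ S, Encodable.encode σ = m}

/-- A set of binary strings is `Σ^0_n`. -/
def SigmaStr (n : ℕ) (S : Set (List Bool)) : Prop := SigmaN n (strCodes S)

/-- A set of binary strings is `Π^0_n`: its complement is `Σ^0_n`. -/
def PiStr (n : ℕ) (S : Set (List Bool)) : Prop := SigmaStr n Sᶜ

/-- A set of binary strings is c.e. relative to the oracle `O`. -/
def CeStrIn (O : ℕ → ℕ) (S : Set (List Bool)) : Prop := CeIn O (strCodes S)

/-- `SigmaClassIdx n c m` is the `Σ^0_{n+1}` class of elements of Cantor space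
with index `c` and parameter `m`. -/
def SigmaClassIdx : ℕ → CodeO → ℕ → Set Cantor
  | 0, c, m => {X | (evalO X c m).Dom}
  | n + 1, c, m => {X | ∃ k, X ∉ SigmaClassIdx n c (Nat.pair m k)}

/-! ### Monotone machines -/

/-- A monotone machine: a partial computable, monotone map on finite binary strings. -/
structure MonoMachine where
  f : List Bool →. List Bool
  partrec : Partrec f
  mono : ∀ ⦃σ τ a b : List Bool⦄, σ <+: τ → a ∈ f σ → b ∈ f τ → a <+: b

/-- The oracles `X` such that the output of the monotone machine on `X` is infinite. -/
def MonoINF (M : MonoMachine) : Set Cantor :=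
  {X | ∀ k, ∃ n a, a ∈ M.f (initSeg X n) ∧ k ≤ a.length}

/-- The `k`-th bit of the output `M(X)` of a monotone machine is `b`. -/
def MonoMachine.hasBit (M : MonoMachine) (X : Cantor) (k : ℕ) (b : Bool) : Prop :=
  ∃ n a, a ∈ M.f (initSeg X n) ∧ a[k]? = some b

/-- `U` is a universal monotone machine. -/
def UniversalMono (U : MonoMachine) : Prop :=
  ∃ (M : ℕ → MonoMachine) (σ : ℕ → List Bool),
    Partrec₂ (fun (e : ℕ) (τ : List Bool) => (M e).f τ) ∧
    (∀ V : MonoMachine, ∃ e, (M e).f = V.f) ∧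
    Computable σ ∧ IsPrefixFree (Set.range σ) ∧
    ∀ e τ, U.f (σ e ++ τ) = (M e).f τ

/-! ### Infinitary self-delimiting machines -/

/-- Chaitin's infinitary self-delimiting machines: `f σ n` is the `n`-th approximation
of the output on program `σ` (`none` meaning divergence); the convergence relation is
decidable, approximations are monotone, and machines are self-delimiting. -/
structure InfMachine where
  f : List Bool → ℕ → Option (List Bool)
  computable : Computable₂ f
  mono : ∀ σ m n a, n < m → f σ m = some a → ∃ b, f σ n = some b ∧ b <+: a
  sd : ∀ σ τ n a, f σ n = some a → f (σ ++ τ) n = some a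

/-- `M^∞(σ)↓`: all approximations converge. -/
def InfMachine.domInf (M : InfMachine) (σ : List Bool) : Prop := ∀ n, M.f σ n ≠ none

/-- The domain of `M^∞`. -/
def InfMachine.DOM (M : InfMachine) : Set (List Bool) := {σ | M.domInf σ}

/-- The output `M^∞(σ)` is infinite (a stream). -/
def InfMachine.outInf (M : InfMachine) (σ : List Bool) : Prop :=
  ∀ k, ∃ n a, M.f σ n = some a ∧ k ≤ a.length

/-- `FIN(M^∞)`: programs in the domain with finite output. -/
def InfMachine.FIN (M : InfMachine) : Set (List Bool) := {σ | M.domInf σ ∧ ¬ M.outInf σ}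

/-- `INF(M^∞)`: programs in the domain with infinite output. -/
def InfMachine.INF (M : InfMachine) : Set (List Bool) := {σ | M.domInf σ ∧ M.outInf σ}

/-- The `k`-th bit of the output `M^∞(σ)` is `b`. -/
def InfMachine.hasBit (M : InfMachine) (σ : List Bool) (k : ℕ) (b : Bool) : Prop :=
  ∃ n a, M.f σ n = some a ∧ a[k]? = some b

/-- The domain of the prefix-free machine `M^*`: minimal strings in the domain of `M^∞`. -/
def InfMachine.DOMstar (M : InfMachine) : Set (List Bool) :=
  {σ | M.domInf σ ∧ ∀ τ, τ <+: σ → τ ≠ σ → ¬ M.domInf τ}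

/-- Programs whose output is a stream with a tail of 1s. -/
def InfMachine.COFout (M : InfMachine) : Set (List Bool) :=
  {σ | M.domInf σ ∧ M.outInf σ ∧ ∃ t, ∀ k, t ≤ k → M.hasBit σ k true}

/-- `A^∞(σ) ≃ B^∞(τ)`: both converge or both diverge, with equal outputs. -/
def InfAgree (A : InfMachine) (σ : List Bool) (B : InfMachine) (τ : List Bool) : Prop :=
  (A.domInf σ ↔ B.domInf τ) ∧ (A.domInf σ → ∀ k b, (A.hasBit σ k b ↔ B.hasBit τ k b))

/-- `U` is a universal infinitary self-delimiting machine. -/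
def UniversalInf (U : InfMachine) : Prop :=
  ∃ (M : ℕ → InfMachine) (σ : ℕ → List Bool),
    Computable (fun p : ℕ × List Bool × ℕ => (M p.1).f p.2.1 p.2.2) ∧
    (∀ V : InfMachine, ∃ e, ∀ τ, InfAgree (M e) τ V τ) ∧
    Computable σ ∧ IsPrefixFree (Set.range σ) ∧
    ∀ e τ, InfAgree U (σ e ++ τ) (M e) τ

end RandProb

namespace RandProb

/-- The upward closure of a finite list of strings. -/
def upClosure (V : List (List Bool)) : Set (List Bool) := {τ | ∃ σ ∈ V, σ <+: τ}


/-!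
Write `U` as `σ ∈ U ↔ ∃ k, ⟨σ, k⟩ ∉ W` with `W` c.e., and enumerate `W` injectively as
`f : ℕ → ℕ`, padded with dummy even numbers so that `f` is total (`n ∈ W` is coded by `2n+1`).
At stage `s` let `V_s` consist of the strings `σ` having a witness `k` whose code is below `f s`
and has not been enumerated by stage `s`. If `σ ∈ U` with witness `k`, the code of `⟨σ, k⟩` is
never enumerated, and by injectivity `f s` eventually exceeds it, so `σ ∈ V_s` from some stage
on. Conversely, at a non-deficiency stage `s` (one with `f s < f t` for all `t > s`; there are
infinitely many) no number below `f s` is enumerated later, so every string of `V_s` has a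
genuine witness and `V_s ⊆ U`.
-/

open Nat.Partrec (Code)
open Nat.Partrec.Code Encodable

def CodeO.toCode : CodeO → Code
  | .zero => .zero
  | .succ => .succ
  | .left => .left
  | .right => .right
  | .oracle => .zero
  | .pair a b => .pair a.toCode b.toCode
  | .comp a b => .comp a.toCode b.toCode
  | .prec a b => .prec a.toCode b.toCode
  | .rfind' a => .rfind' a.toCode

theorem CodeO.eval_toCode (c : CodeO) : c.toCode.eval = eval0 c := by
  induction c with
  | zero | succ | left | right | oracle => rfl
  | pair a b iha ihb => simp only [toCode, Code.eval, iha, ihb]; rfl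
  | comp a b iha ihb => simp only [toCode, Code.eval, iha, ihb]; rfl
  | prec a b iha ihb => simp only [toCode, Code.eval, iha, ihb]; rfl
  | rfind' a iha => simp only [toCode, Code.eval, iha]; rfl

theorem encode_mem_strCodes {S : Set (List Bool)} {σ : List Bool} :
    encode σ ∈ strCodes S ↔ σ ∈ S :=
  ⟨fun ⟨_, hτ, he⟩ => encode_injective he ▸ hτ, fun hσ => ⟨σ, hσ, rfl⟩⟩

theorem exists_code_of_sigmaStr_two {U : Set (List Bool)} (hU : SigmaStr 2 U) :
    ∃ c : Code, ∀ σ, σ ∈ U ↔ ∃ k, ¬ (c.eval (Nat.pair (encode σ) k)).Dom := by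
  obtain ⟨c, hc⟩ := hU
  refine ⟨c.toCode, fun σ => ?_⟩
  rw [← encode_mem_strCodes, hc, c.eval_toCode]
  rfl

section Enumeration

variable (c : Code)

def FirstHalt (n t : ℕ) : Prop := ¬ (evaln t c n).isSome ∧ (evaln (t + 1) c n).isSome

instance (n t : ℕ) : Decidable (FirstHalt c n t) := inferInstanceAs (Decidable (_ ∧ _))

variable {c}

theorem isSome_evaln_mono {k₁ k₂ n : ℕ} (hk : k₁ ≤ k₂) (h : (evaln k₁ c n).isSome) :
    (evaln k₂ c n).isSome := by
  obtain ⟨x, hx⟩ := Option.isSome_iff_exists.mp h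
  exact Option.isSome_iff_exists.mpr ⟨x, evaln_mono hk hx⟩

theorem FirstHalt.le {n t t' : ℕ} (h : FirstHalt c n t) (h' : FirstHalt c n t') : t ≤ t' :=
  not_lt.mp fun hlt => h.1 (isSome_evaln_mono hlt h'.2)

theorem FirstHalt.unique {n t t' : ℕ} (h : FirstHalt c n t) (h' : FirstHalt c n t') : t = t' :=
  le_antisymm (h.le h') (h'.le h)

theorem dom_eval_iff_exists_firstHalt {n : ℕ} : (c.eval n).Dom ↔ ∃ t, FirstHalt c n t := by
  have hdom : (c.eval n).Dom ↔ ∃ t, (evaln t c n).isSome := by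
    simp only [Part.dom_iff_mem, evaln_complete, Option.isSome_iff_exists, Option.mem_def]
    exact exists_comm
  rw [hdom]
  refine ⟨Nat.exists_not_and_succ_of_not_zero_of_exists (by simp [evaln]), ?_⟩
  rintro ⟨t, -, ht⟩
  exact ⟨t + 1, ht⟩

variable (c)

theorem primrecRel_firstHalt : PrimrecRel (FirstHalt c) := by
  have hevaln : Primrec₂ fun n t => (evaln t c n).isSome :=
    Primrec.option_isSome.comp
      (primrec_evaln.comp ((Primrec.snd.pair (Primrec.const c)).pair Primrec.fst))
  refine PrimrecPred.and (PrimrecPred.not ?_) ?_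
  · exact Primrec.eq.comp hevaln (Primrec.const true)
  · exact Primrec.eq.comp (hevaln.comp Primrec.fst (Primrec.succ.comp Primrec.snd))
      (Primrec.const true)

def paddedEnum (p : ℕ) : ℕ :=
  if FirstHalt c p.unpair.1 p.unpair.2 then 2 * p.unpair.1 + 1 else 2 * p

theorem primrec_paddedEnum : Primrec (paddedEnum c) :=
  Primrec.ite ((primrecRel_firstHalt c).comp (Primrec.fst.comp Primrec.unpair)
      (Primrec.snd.comp Primrec.unpair))
    (Primrec.succ.comp (Primrec.nat_mul.comp (Primrec.const 2)
      (Primrec.fst.comp Primrec.unpair)))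
    (Primrec.nat_mul.comp (Primrec.const 2) Primrec.id)

theorem paddedEnum_injective : Function.Injective (paddedEnum c) := by
  intro p q hpq
  unfold paddedEnum at hpq
  split_ifs at hpq with hp hq hq
  · have hn : p.unpair.1 = q.unpair.1 := by omega
    have ht : p.unpair.2 = q.unpair.2 := (hn ▸ hp).unique hq
    rw [← Nat.pair_unpair p, ← Nat.pair_unpair q, hn, ht]
  all_goals omega

theorem odd_mem_range_paddedEnum_iff {n : ℕ} :
    2 * n + 1 ∈ Set.range (paddedEnum c) ↔ (c.eval n).Dom := by
  rw [dom_eval_iff_exists_firstHalt]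
  constructor
  · rintro ⟨p, hp⟩
    unfold paddedEnum at hp
    split_ifs at hp with h
    · exact ⟨p.unpair.2, by rwa [show p.unpair.1 = n by omega] at h⟩
    · omega
  · rintro ⟨t, ht⟩
    exact ⟨Nat.pair n t, by simp [paddedEnum, ht]⟩

end Enumeration

section Stages

variable (f : ℕ → ℕ)

def Fresh (s a : ℕ) : Prop := a < f s ∧ ∀ t ≤ s, f t ≠ a

instance (s a : ℕ) : Decidable (Fresh f s a) := inferInstanceAs (Decidable (_ ∧ _))

def NonDeficient (s : ℕ) : Prop := ∀ t, s < t → f s < f t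

variable {f}

theorem infinite_setOf_nonDeficient (hf : Function.Injective f) :
    {s | NonDeficient f s}.Infinite := by
  refine Set.infinite_of_forall_exists_gt fun N => ?_
  have hne : (Set.Ioi N).Nonempty := Set.nonempty_Ioi
  set s := Function.argminOn f (Set.Ioi N) hne
  have hsN : N < s := Function.argminOn_mem f _ hne
  refine ⟨s, fun t hst => ?_, hsN⟩
  exact lt_of_le_of_ne (Function.argminOn_le f _ (hsN.trans hst)) (hf.ne hst.ne)

theorem eventually_fresh (hf : Function.Injective f) {a : ℕ} (ha : a ∉ Set.range f) :
    ∃ s₀, ∀ s, s₀ < s → Fresh f s a := by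
  obtain ⟨s₀, hs₀⟩ :=
    Filter.eventually_atTop.mp (Filter.tendsto_atTop.mp hf.nat_tendsto_atTop (a + 1))
  exact ⟨s₀, fun s hs => ⟨hs₀ s hs.le, fun t _ hta => ha ⟨t, hta⟩⟩⟩

theorem NonDeficient.not_mem_range {s a : ℕ} (hs : NonDeficient f s) (ha : Fresh f s a) :
    a ∉ Set.range f := by
  rintro ⟨t, rfl⟩
  rcases le_or_gt t s with hts | hst
  · exact ha.2 t hts rfl
  · exact (hs t hst).not_gt ha.1

theorem primrecRel_fresh (hf : Primrec f) : PrimrecRel (Fresh f) := by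
  have hbelow : PrimrecRel fun s a => a < f s :=
    Primrec.nat_lt.comp Primrec.snd (hf.comp Primrec.fst)
  have hne : PrimrecRel fun t a => f t ≠ a :=
    (Primrec.eq.comp (hf.comp Primrec.fst) Primrec.snd).not
  have hnew : PrimrecRel fun s a => ∀ t < s + 1, f t ≠ a :=
    hne.forall_lt.comp (Primrec.succ.comp Primrec.fst) Primrec.snd
  exact (PrimrecPred.and hbelow hnew).of_eq fun _ => by simp [Fresh]

end Stages

section Approximation

variable (f : ℕ → ℕ)

def canonicalApprox (s : ℕ) : List (List Bool) :=
  (List.range (f s)).filterMap fun n =>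
    if Fresh f s (2 * n + 1) then decode₂ (List Bool) n.unpair.1 else none

variable {f}

theorem mem_canonicalApprox {s : ℕ} {σ : List Bool} :
    σ ∈ canonicalApprox f s ↔ ∃ k, Fresh f s (2 * Nat.pair (encode σ) k + 1) := by
  simp only [canonicalApprox, List.mem_filterMap, List.mem_range, Option.ite_none_right_eq_some,
    decode₂_eq_some]
  constructor
  · rintro ⟨n, -, hn, he⟩
    exact ⟨n.unpair.2, by rwa [he, Nat.pair_unpair]⟩
  · rintro ⟨k, hk⟩
    exact ⟨Nat.pair (encode σ) k, by have := hk.1; omega, hk, Nat.unpair_pair _ _ ▸ rfl⟩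

theorem primrec_canonicalApprox (hf : Primrec f) : Primrec (canonicalApprox f) :=
  Primrec.listFilterMap (Primrec.list_range.comp hf)
    (Primrec.ite ((primrecRel_fresh hf).comp Primrec.fst
        (Primrec.succ.comp (Primrec.nat_mul.comp (Primrec.const 2) Primrec.snd)))
      (Primrec.decode₂.comp (Primrec.fst.comp (Primrec.unpair.comp Primrec.snd)))
      (Primrec.const none))

variable {U : Set (List Bool)}

theorem upClosure_canonicalApprox_subset
    (hU : ∀ σ, σ ∈ U ↔ ∃ k, 2 * Nat.pair (encode σ) k + 1 ∉ Set.range f) (hup : UpClosed U)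
    {s : ℕ} (hs : NonDeficient f s) :
    upClosure (canonicalApprox f s) ⊆ U := by
  rintro τ ⟨σ, hσ, hστ⟩
  obtain ⟨k, hk⟩ := mem_canonicalApprox.mp hσ
  exact hup σ ((hU σ).mpr ⟨k, hs.not_mem_range hk⟩) τ hστ

theorem mem_iff_eventually_mem_upClosure_canonicalApprox
    (hU : ∀ σ, σ ∈ U ↔ ∃ k, 2 * Nat.pair (encode σ) k + 1 ∉ Set.range f) (hup : UpClosed U)
    (hf : Function.Injective f) (σ : List Bool) :
    σ ∈ U ↔ ∃ s₀, ∀ s, s₀ < s → σ ∈ upClosure (canonicalApprox f s) := by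
  constructor
  · intro hσ
    obtain ⟨k, hk⟩ := (hU σ).mp hσ
    obtain ⟨s₀, hs₀⟩ := eventually_fresh hf hk
    exact ⟨s₀, fun s hs => ⟨σ, mem_canonicalApprox.mpr ⟨k, hs₀ s hs⟩, List.prefix_refl σ⟩⟩
  · rintro ⟨s₀, hs₀⟩
    obtain ⟨s, hs, hs₀s⟩ := (infinite_setOf_nonDeficient hf).exists_gt s₀
    exact upClosure_canonicalApprox_subset hU hup hs (hs₀ s hs₀s)

end Approximation

/-- **Canonical `Σ^0_2` approximations.**
Every `Σ^0_2` upward closed set of strings `U` has a computable sequence `(V_s)` of finite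
sets of strings such that membership of `σ` in `U` is equivalent to membership of `σ` in
the upward closure of `V_s` for all sufficiently large `s`, and infinitely often the
upward closure of `V_s` is contained in `U`. -/
theorem canonical_sigma2_approximation (U : Set (List Bool)) (hU : SigmaStr 2 U)
    (hup : UpClosed U) :
    ∃ V : ℕ → List (List Bool), Computable V ∧
      (∀ σ, σ ∈ U ↔ ∃ s₀, ∀ s, s₀ < s → σ ∈ upClosure (V s)) ∧
      {s | upClosure (V s) ⊆ U}.Infinite := by
  obtain ⟨c, hc⟩ := exists_code_of_sigmaStr_two hU
  have hU' : ∀ σ, σ ∈ U ↔ ∃ k, 2 * Nat.pair (encode σ) k + 1 ∉ Set.range (paddedEnum c) := by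
    simpa only [odd_mem_range_paddedEnum_iff] using hc
  refine ⟨canonicalApprox (paddedEnum c),
    (primrec_canonicalApprox (primrec_paddedEnum c)).to_comp,
    mem_iff_eventually_mem_upClosure_canonicalApprox hU' hup (paddedEnum_injective c), ?_⟩
  exact (infinite_setOf_nonDeficient (paddedEnum_injective c)).mono
    fun s hs => upClosure_canonicalApprox_subset hU' hup hs

end RandProb
end

section
/- Given any Σ^0_2 set U of finite binary strings, there exists an oracle machine M such that for each X ∈ 2^ω the following are equivalent: (i) M(X) is total; (ii) M(X) has infinite domain; (iii) X has no prefix in U. -/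
open scoped Classical
open MeasureTheory

/-! `X` avoids `⟦U⟧` iff the `Π⁰₂` condition "the computation `φ(X ↾ m, k)` halts for all
`m, k`" holds, where `U = {σ | ∃ k, φ(σ, k)↑}`. Listing the pairs `(m, k)` as `j = ⟨m, k⟩`,
the machine `M(X, n)` runs the tests `j = 0, …, n` one after the other. So the domain of
`M(X)` is an initial segment of `ℕ`, and it is all of `ℕ` (equivalently, infinite) exactly
when every test halts. -/

namespace RandProb

theorem encode_mem_strCodes_iff {S : Set (List Bool)} {σ : List Bool} :
    Encodable.encode σ ∈ strCodes S ↔ σ ∈ S :=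
  ⟨fun ⟨_, hτ, hτσ⟩ => Encodable.encode_injective hτσ ▸ hτ, fun hσ => ⟨σ, hσ, rfl⟩⟩

namespace CodeO

variable {O : ℕ → ℕ}

@[simp] theorem eval_zero (n : ℕ) : zero.eval O n = Part.some 0 := rfl
@[simp] theorem eval_succ (n : ℕ) : succ.eval O n = Part.some (n + 1) := rfl
@[simp] theorem eval_left (n : ℕ) : left.eval O n = Part.some n.unpair.1 := rfl
@[simp] theorem eval_right (n : ℕ) : right.eval O n = Part.some n.unpair.2 := rfl
@[simp] theorem eval_oracle (n : ℕ) : oracle.eval O n = Part.some (O n) := rfl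

theorem eval_comp (c d : CodeO) (n : ℕ) : (comp c d).eval O n = (d.eval O n).bind (c.eval O) :=
  rfl

@[simp] theorem some_bind_eval (c : CodeO) (a : ℕ) : (Part.some a).bind (c.eval O) = c.eval O a :=
  Part.bind_some a _

theorem eval_comp_of_eval_eq_some {c d : CodeO} {n a : ℕ} (hd : d.eval O n = Part.some a) :
    (comp c d).eval O n = c.eval O a := by
  rw [eval_comp, hd, some_bind_eval]

theorem eval_pair_of_eval_eq_some {c d : CodeO} {n a b : ℕ} (hc : c.eval O n = Part.some a)
    (hd : d.eval O n = Part.some b) : (pair c d).eval O n = Part.some (Nat.pair a b) := by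
  simp [eval, hc, hd, Seq.seq]

theorem eval_prec_zero (c d : CodeO) (a : ℕ) : (prec c d).eval O (Nat.pair a 0) = c.eval O a := by
  simp [eval]

theorem eval_prec_succ (c d : CodeO) (a n : ℕ) :
    (prec c d).eval O (Nat.pair a (n + 1)) =
      ((prec c d).eval O (Nat.pair a n)).bind fun i => d.eval O (Nat.pair a (Nat.pair n i)) := by
  simp [eval]

protected def id : CodeO := pair left right

@[simp] theorem eval_id (n : ℕ) : CodeO.id.eval O n = Part.some n := by
  simp [CodeO.id, eval_pair_of_eval_eq_some]

theorem eval_comp_pair_zero_id (c : CodeO) (n : ℕ) :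
    (comp c (pair zero CodeO.id)).eval O n = c.eval O (Nat.pair 0 n) :=
  eval_comp_of_eval_eq_some (eval_pair_of_eval_eq_some (eval_zero n) (eval_id n))

def dropOracle : CodeO → CodeO
  | zero => zero
  | succ => succ
  | left => left
  | right => right
  | oracle => zero
  | pair c d => pair c.dropOracle d.dropOracle
  | comp c d => comp c.dropOracle d.dropOracle
  | prec c d => prec c.dropOracle d.dropOracle
  | rfind' c => rfind' c.dropOracle

theorem eval_dropOracle (c : CodeO) : c.dropOracle.eval O = c.eval fun _ => 0 := by
  induction c <;> simp_all [dropOracle, eval] <;> rfl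

def ofCode : Nat.Partrec.Code → CodeO
  | .zero => zero
  | .succ => succ
  | .left => left
  | .right => right
  | .pair c d => pair (ofCode c) (ofCode d)
  | .comp c d => comp (ofCode c) (ofCode d)
  | .prec c d => prec (ofCode c) (ofCode d)
  | .rfind' c => rfind' (ofCode c)

theorem eval_ofCode (c : Nat.Partrec.Code) : (ofCode c).eval O = c.eval := by
  induction c <;> simp_all [ofCode, eval, Nat.Partrec.Code.eval] <;> rfl

theorem exists_eval_eq_of_partrec {f : ℕ →. ℕ} (hf : Nat.Partrec f) :
    ∃ c : CodeO, ∀ O, c.eval O = f := by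
  obtain ⟨c, rfl⟩ := Nat.Partrec.Code.exists_code.mp hf
  exact ⟨ofCode c, fun _ => eval_ofCode c⟩

/-- The recursion step `⟨0, y, i⟩ ↦ c (y + 1)` discards the previous value `i`. -/
def upTo (c : CodeO) : CodeO :=
  comp (prec c (comp c (comp succ (comp left right)))) (pair zero CodeO.id)

theorem eval_upTo_dom_iff (c : CodeO) (n : ℕ) :
    ((upTo c).eval O n).Dom ↔ ∀ j ≤ n, (c.eval O j).Dom := by
  rw [upTo, eval_comp_pair_zero_id]
  induction n with
  | zero => simp [eval_prec_zero]
  | succ n ih =>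
    have hstep (i : ℕ) : (comp c (comp succ (comp left right))).eval O
        (Nat.pair 0 (Nat.pair n i)) = c.eval O (n + 1) := by
      simp [eval_comp]
    simp only [eval_prec_succ, Part.bind_dom, hstep, ih, exists_prop, Nat.le_succ_iff, or_imp,
      forall_and, forall_eq]

theorem forall_eval_upTo_dom_iff (c : CodeO) :
    (∀ n, ((upTo c).eval O n).Dom) ↔ ∀ n, (c.eval O n).Dom := by
  simp only [eval_upTo_dom_iff]
  exact ⟨fun h n => h n n le_rfl, fun h n j _ => h j⟩

theorem infinite_eval_upTo_dom_iff (c : CodeO) :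
    {n | ((upTo c).eval O n).Dom}.Infinite ↔ ∀ n, (c.eval O n).Dom := by
  refine ⟨fun h j => ?_, fun h => ?_⟩
  · obtain ⟨n, hn, hjn⟩ := h.exists_gt j
    exact (eval_upTo_dom_iff c n).mp hn j hjn.le
  · simpa [(forall_eval_upTo_dom_iff c).mpr h] using Set.infinite_univ

end CodeO

open CodeO Encodable

theorem exists_eval_oX_eq_initSeg :
    ∃ c : CodeO, ∀ X m, c.eval (oX X) m = Part.some (encode (initSeg X m)) := by
  obtain ⟨snoc, hsnoc⟩ := exists_eval_eq_of_partrec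
    (Primrec.list_concat (α := Bool)).to_comp.to₂
  have hsnoc' (O : ℕ → ℕ) (l : List Bool) (b : Bool) :
      snoc.eval O (Nat.pair (encode l) (encode b)) = Part.some (encode (l ++ [b])) := by
    rw [hsnoc, ← encode_prod_val]
    simp
  -- the recursion step is `⟨0, y, encode σ⟩ ↦ encode (σ ++ [X y])`
  refine ⟨comp (prec zero (comp snoc (pair (comp right right) (comp oracle (comp left right)))))
    (pair zero CodeO.id), fun X m => ?_⟩
  rw [eval_comp_pair_zero_id]
  induction m with
  | zero => rw [eval_prec_zero]; rfl
  | succ m ih =>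
    have hbit : oX X m = encode (X m) := by unfold oX; cases X m <;> rfl
    have hargs : (pair (comp right right) (comp oracle (comp left right))).eval (oX X)
        (Nat.pair 0 (Nat.pair m (encode (initSeg X m)))) =
          Part.some (Nat.pair (encode (initSeg X m)) (encode (X m))) :=
      eval_pair_of_eval_eq_some (by simp [eval_comp]) (by simp [eval_comp, hbit])
    rw [eval_prec_succ, ih, Part.bind_some, eval_comp_of_eval_eq_some hargs, hsnoc']
    simp [initSeg, List.range_succ]

theorem exists_eval_oX_eq_eval0_initSeg (c : CodeO) :
    ∃ g : CodeO, ∀ X j, g.eval (oX X) j =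
      eval0 c (Nat.pair (encode (initSeg X j.unpair.1)) j.unpair.2) := by
  obtain ⟨s, hs⟩ := exists_eval_oX_eq_initSeg
  refine ⟨comp c.dropOracle (pair (comp s left) right), fun X j => ?_⟩
  rw [eval_comp_of_eval_eq_some (eval_pair_of_eval_eq_some
    ((eval_comp_of_eval_eq_some (eval_left j)).trans (hs X _)) (eval_right j)),
    eval_dropOracle]
  rfl

theorem notMem_cyl_iff_forall_dom {U : Set (List Bool)} {c : CodeO}
    (hc : strCodes U = SigmaNumIdx 1 c) (X : Cantor) :
    X ∉ cyl U ↔ ∀ j : ℕ, (eval0 c (Nat.pair (encode (initSeg X j.unpair.1)) j.unpair.2)).Dom := by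
  have hmem (σ : List Bool) : σ ∈ U ↔ ∃ k, ¬ (eval0 c (Nat.pair (encode σ) k)).Dom := by
    rw [← encode_mem_strCodes_iff, hc]
    simp [SigmaNumIdx]
  simp only [cyl, Set.mem_ofPred_eq, hmem, not_exists, not_not]
  exact ⟨fun h j => h _ _, fun h m k => by simpa using h (Nat.pair m k)⟩

/-- **From a `Σ^0_2` set of strings to an oracle machine.**
Given a `Σ^0_2` set `U` of strings there is an oracle machine `M` such that, for every
`X ∈ 2^ω`: `M(X)` is total iff `M(X)` has infinite domain iff `X` has no prefix in `U`. -/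
theorem sigma2_to_oracle_machine (U : Set (List Bool)) (hU : SigmaStr 2 U) :
    ∃ M : CodeO, ∀ X : Cantor,
      (X ∈ TOT M ↔ X ∉ cyl U) ∧ (X ∈ INF M ↔ X ∉ cyl U) := by
  obtain ⟨c, hc⟩ := hU
  obtain ⟨g, hg⟩ := exists_eval_oX_eq_eval0_initSeg c
  refine ⟨upTo g, fun X => ?_⟩
  have hcyl : X ∉ cyl U ↔ ∀ j, (g.eval (oX X) j).Dom := by
    simpa only [hg] using notMem_cyl_iff_forall_dom hc X
  exact ⟨(forall_eval_upTo_dom_iff g).trans hcyl.symm,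
    (infinite_eval_upTo_dom_iff g).trans hcyl.symm⟩

end RandProb
end
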